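/- arXiv:1211.0258 — 4 statements merged into one kernel-verified Lean document; each statement's English description precedes it below -/
import Mathlib

section
/- Let s = (s_1, ..., s_n) be a sequence of positive integers such that \gcd(s_i, s_{i+1}) = 1 for 1 \le i < n. Then the s-lecture hall cone C_n^{(s)} is Gorenstein if and only if s is u-generated by some sequence u = (u_1, ..., u_{n-1}) of positive integers. Moreover, when such a sequence u exists, the Gorenstein point c of C_n^{(s)} is given by c_1 = 1, c_2 = u_1, and c_{i+1} = u_i c_i - c_{i-1} for 2 \le i < n. -/
/-!
In lattice coordinates the cone is cut out by the linear forms `λ₁` and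
`Dᵢ(λ) = sᵢ λᵢ₊₁ - sᵢ₊₁ λᵢ`, so an integer point lies in the interior iff all these forms are
`≥ 1`. Hence an integer point `c` is a Gorenstein point iff every form takes the value `1` at `c`:
then `λ ↦ λ - c` maps the interior lattice points onto the lattice points of the cone; conversely,
since `sₖ` and `sₖ₊₁` are coprime, every form takes the value `1` at some interior lattice point,
which must lie in `c + C`.

If `Dᵢ₋₁(c) = Dᵢ(c) = 1`, then `cᵢ (sᵢ₋₁ + sᵢ₊₁) = sᵢ (cᵢ₋₁ + cᵢ₊₁)` with `gcd(sᵢ, cᵢ) = 1`, so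
`uᵢ = (sᵢ₋₁ + sᵢ₊₁) / sᵢ` is a positive integer generating `s`. Conversely, when `s` and `c`
satisfy the same recurrence, `Dᵢ(c)` does not depend on `i`.
-/

noncomputable section

open scoped Classical

/-- The set of integer lattice points in `ℝ^n`. -/
def intLattice (n : ℕ) : Set (Fin n → ℝ) :=
  Set.range (fun (m : Fin n → ℤ) => fun i => (m i : ℝ))

/-- `c` is a Gorenstein point of `C`: an integer point in the interior of `C`
with `C° ∩ ℤ^n = c + (C ∩ ℤ^n)`. -/
def IsGorensteinPoint {n : ℕ} (C : Set (Fin n → ℝ)) (c : Fin n → ℝ) : Prop :=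
  c ∈ interior C ∧ c ∈ intLattice n ∧
    interior C ∩ intLattice n = (fun x => c + x) '' (C ∩ intLattice n)

/-- A cone is Gorenstein if it has a Gorenstein point. -/
def IsGorensteinCone {n : ℕ} (C : Set (Fin n → ℝ)) : Prop :=
  ∃ c, IsGorensteinPoint C c

/-- The `s`-lecture hall cone `{λ : 0 ≤ λ₁/s₁ ≤ λ₂/s₂ ≤ ⋯ ≤ λₙ/sₙ}`,
where coordinate `i : Fin n` corresponds to the mathematical index `i+1`. -/
def lhCone (n : ℕ) (s : ℕ → ℤ) : Set (Fin n → ℝ) :=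
  {x | (∀ i : Fin n, (i : ℕ) = 0 → 0 ≤ x i / (s 1 : ℝ)) ∧
       (∀ i j : Fin n, (j : ℕ) = (i : ℕ) + 1 →
          x i / (s ((i : ℕ) + 1) : ℝ) ≤ x j / (s ((j : ℕ) + 1) : ℝ))}

/-- The `s`-lecture hall partitions of length `n`: integer points of the cone. -/
def lhPartitions (n : ℕ) (s : ℕ → ℤ) : Set (Fin n → ℤ) :=
  {lam | (fun i => (lam i : ℝ)) ∈ lhCone n s}

/-- The generating function `f_n^{(s)}(q) = ∑_{λ ∈ L_n^{(s)}} q^{|λ|}` as a power series. -/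
def lhGenFun (n : ℕ) (s : ℕ → ℤ) : PowerSeries ℚ :=
  PowerSeries.mk fun m =>
    (Set.ncard {lam : Fin n → ℤ | lam ∈ lhPartitions n s ∧ ∑ i, lam i = (m : ℤ)} : ℚ)

/-- A rational function `r(q)` is self-reciprocal if `r(1/q) = ± q^k r(q)`
for some nonnegative integer `k`. -/
def SelfReciprocalRat (r : RatFunc ℚ) : Prop :=
  ∃ k : ℕ, RatFunc.eval (algebraMap ℚ (RatFunc ℚ)) (RatFunc.X)⁻¹ r = RatFunc.X ^ k * r ∨
           RatFunc.eval (algebraMap ℚ (RatFunc ℚ)) (RatFunc.X)⁻¹ r = -(RatFunc.X ^ k * r)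

/-- A power series is self-reciprocal as a rational function: it is the power series
expansion of a rational function `H/D` (with `D(0) ≠ 0`) which is self-reciprocal. -/
def GenFunSelfReciprocal (f : PowerSeries ℚ) : Prop :=
  ∃ H D : Polynomial ℚ, D.coeff 0 ≠ 0 ∧
    (↑H : PowerSeries ℚ) = f * (↑D : PowerSeries ℚ) ∧
    SelfReciprocalRat (algebraMap (Polynomial ℚ) (RatFunc ℚ) H /
      algebraMap (Polynomial ℚ) (RatFunc ℚ) D)

/-- The sequence `(s₁,…,sₙ)` is `u`-generated by `(u₁,…,u_{n-1})`:
`s₂ = u₁s₁ - 1` and `s_{i+1} = uᵢsᵢ - s_{i-1}` for `i > 1`. -/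
def UGenerated (n : ℕ) (s u : ℕ → ℤ) : Prop :=
  (2 ≤ n → s 2 = u 1 * s 1 - 1) ∧
  ∀ i, 1 < i → i + 1 ≤ n → s (i + 1) = u i * s i - s (i - 1)

theorem forall_lt_iff_zero_and_succ {n : ℕ} {P : ℕ → Prop} :
    (∀ i < n, P i) ↔ (0 < n → P 0) ∧ ∀ i, i + 1 < n → P (i + 1) := by
  refine ⟨fun h => ⟨h 0, fun i => h (i + 1)⟩, fun ⟨h0, hsucc⟩ i hi => ?_⟩
  cases i with
  | zero => exact h0 hi
  | succ i => exact hsucc i hi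

theorem Fin.forall_coe_eq_zero_imp {n : ℕ} {P : ℕ → Prop} :
    (∀ i : Fin n, (i : ℕ) = 0 → P i) ↔ (0 < n → P 0) :=
  ⟨fun h hn => h ⟨0, hn⟩ rfl, fun h i hi => hi ▸ h (hi ▸ i.pos)⟩

theorem Fin.forall_coe_eq_succ_imp {n : ℕ} {P : ℕ → ℕ → Prop} :
    (∀ i j : Fin n, (j : ℕ) = i + 1 → P i j) ↔ ∀ i, i + 1 < n → P i (i + 1) :=
  ⟨fun h i hi => h ⟨i, by omega⟩ ⟨i + 1, hi⟩ rfl, fun h i j hij => hij ▸ h i (hij ▸ j.isLt)⟩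

theorem interior_setOf_forall_nonneg {ι E : Type*} [Finite ι] [AddCommGroup E]
    [TopologicalSpace E] [ContinuousAdd E] [Module ℝ E] [ContinuousSMul ℝ E] (P : ι → Prop)
    (ℓ : ι → StrongDual ℝ E) (hℓ : ∀ k, P k → ℓ k ≠ 0) :
    interior {x | ∀ k, P k → 0 ≤ ℓ k x} = {x | ∀ k, P k → 0 < ℓ k x} := by
  have hset : {x | ∀ k, P k → 0 ≤ ℓ k x} = ⋂ k, ⋂ (_ : P k), ℓ k ⁻¹' Set.Ici 0 := by
    ext x
    simp
  simp_rw [hset, interior_iInter_of_finite]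
  ext x
  simp only [Set.mem_iInter, Set.mem_ofPred_eq]
  refine forall₂_congr fun k hk => ?_
  rw [← ((ℓ k).isOpenMap_of_ne_zero (hℓ k hk)).preimage_interior_eq_interior_preimage
    (ℓ k).continuous, interior_Ici, Set.mem_preimage, Set.mem_Ioi]

theorem dvd_add_of_mul_sub_eq_one {a b c x y z : ℤ} (h₁ : a * y - b * x = 1)
    (h₂ : b * z - c * y = 1) : b ∣ a + c := by
  have hcop : IsCoprime b y := ⟨-x, a, by linear_combination h₁⟩
  exact hcop.dvd_of_dvd_mul_right ⟨x + z, by linear_combination h₁ - h₂⟩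

theorem interior_lhCone {n : ℕ} {s : ℕ → ℤ} (hs : ∀ i, 1 ≤ i → i ≤ n → s i ≠ 0) :
    interior (lhCone n s) =
      {x | (∀ i : Fin n, (i : ℕ) = 0 → 0 < x i / (s 1 : ℝ)) ∧
        (∀ i j : Fin n, (j : ℕ) = (i : ℕ) + 1 →
          x i / (s ((i : ℕ) + 1) : ℝ) < x j / (s ((j : ℕ) + 1) : ℝ))} := by
  have hs' (i : Fin n) : (s ((i : ℕ) + 1) : ℝ) ≠ 0 := by exact_mod_cast hs _ (by omega) i.isLt
  let slope (i : Fin n) : StrongDual ℝ (Fin n → ℝ) :=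
    (s ((i : ℕ) + 1) : ℝ)⁻¹ • ContinuousLinearMap.proj i
  have hcone : lhCone n s = {x | ∀ i : Fin n, (i : ℕ) = 0 → 0 ≤ slope i x} ∩
      {x | ∀ p : Fin n × Fin n, (p.2 : ℕ) = p.1 + 1 → 0 ≤ (slope p.2 - slope p.1) x} := by
    ext x
    simp +contextual [lhCone, slope, div_eq_inv_mul]
  have slope_ne (i : Fin n) : slope i ≠ 0 := fun h => by
    simpa [slope, hs' i] using congrArg (fun ℓ => ℓ (Pi.single i 1)) h
  have slope_sub_ne (p : Fin n × Fin n) (hp : (p.2 : ℕ) = p.1 + 1) : slope p.2 - slope p.1 ≠ 0 := by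
    have hij : p.1 ≠ p.2 := fun h => by rw [h] at hp; omega
    intro h
    simpa [slope, hs' p.2, hij] using congrArg (fun ℓ => ℓ (Pi.single p.2 1)) h
  rw [hcone, interior_inter, interior_setOf_forall_nonneg _ slope fun i _ => slope_ne i,
    interior_setOf_forall_nonneg _ _ slope_sub_ne]
  ext x
  simp +contextual [slope, div_eq_inv_mul]

-- Sequences are indexed from `1` as in the paper: index `j` is coordinate `j - 1` of `ℝⁿ`.
def latticeVec (n : ℕ) (x : ℕ → ℤ) : Fin n → ℝ := fun i => (x ((i : ℕ) + 1) : ℝ)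

def lhForm (s : ℕ → ℤ) (i : ℕ) : (ℕ → ℤ) →ₗ[ℤ] ℤ :=
  if i = 0 then LinearMap.proj 1 else s i • LinearMap.proj (i + 1) - s (i + 1) • LinearMap.proj i

theorem lhForm_apply (s x : ℕ → ℤ) (i : ℕ) :
    lhForm s i x = if i = 0 then x 1 else s i * x (i + 1) - s (i + 1) * x i := by
  unfold lhForm
  split_ifs <;> simp

section

variable {n : ℕ} {s : ℕ → ℤ}

theorem latticeVec_mem_lhCone_iff (hs : ∀ i, 1 ≤ i → i ≤ n → 0 < s i) (x : ℕ → ℤ) :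
    latticeVec n x ∈ lhCone n s ↔ ∀ i < n, 0 ≤ lhForm s i x := by
  have hs' (i : ℕ) (hi : i < n) : (0 : ℝ) < s (i + 1) := by exact_mod_cast hs _ (by omega) hi
  simp only [lhCone, latticeVec, Set.mem_ofPred_eq,
    Fin.forall_coe_eq_zero_imp (P := fun i => 0 ≤ (x (i + 1) : ℝ) / s 1),
    Fin.forall_coe_eq_succ_imp
      (P := fun i j => (x (i + 1) : ℝ) / s (i + 1) ≤ x (j + 1) / s (j + 1)),
    forall_lt_iff_zero_and_succ (n := n)]
  refine and_congr (imp_congr_right fun hn => ?_) (forall₂_congr fun i hi => ?_)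
  · rw [le_div_iff₀ (hs' 0 hn), zero_mul, lhForm_apply, if_pos rfl]
    norm_cast
  · rw [div_le_div_iff₀ (hs' i (by omega)) (hs' (i + 1) hi), lhForm_apply,
      if_neg i.succ_ne_zero, sub_nonneg, mul_comm (s _), mul_comm (s _)]
    norm_cast

theorem latticeVec_mem_interior_lhCone_iff (hs : ∀ i, 1 ≤ i → i ≤ n → 0 < s i) (x : ℕ → ℤ) :
    latticeVec n x ∈ interior (lhCone n s) ↔ ∀ i < n, 0 < lhForm s i x := by
  have hs' (i : ℕ) (hi : i < n) : (0 : ℝ) < s (i + 1) := by exact_mod_cast hs _ (by omega) hi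
  simp only [interior_lhCone fun i h1 h2 => (hs i h1 h2).ne', latticeVec, Set.mem_ofPred_eq,
    Fin.forall_coe_eq_zero_imp (P := fun i => 0 < (x (i + 1) : ℝ) / s 1),
    Fin.forall_coe_eq_succ_imp
      (P := fun i j => (x (i + 1) : ℝ) / s (i + 1) < x (j + 1) / s (j + 1)),
    forall_lt_iff_zero_and_succ (n := n)]
  refine and_congr (imp_congr_right fun hn => ?_) (forall₂_congr fun i hi => ?_)
  · rw [lt_div_iff₀ (hs' 0 hn), zero_mul, lhForm_apply, if_pos rfl]
    norm_cast
  · rw [div_lt_div_iff₀ (hs' i (by omega)) (hs' (i + 1) hi), lhForm_apply,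
      if_neg i.succ_ne_zero, sub_pos, mul_comm (s _), mul_comm (s _)]
    norm_cast

theorem latticeVec_add (x y : ℕ → ℤ) :
    latticeVec n (x + y) = latticeVec n x + latticeVec n y := by
  funext i
  simp [latticeVec]

theorem mem_intLattice_iff {v : Fin n → ℝ} :
    v ∈ intLattice n ↔ ∃ x : ℕ → ℤ, latticeVec n x = v := by
  constructor
  · rintro ⟨m, rfl⟩
    exact ⟨fun j => if h : j - 1 < n then m ⟨j - 1, h⟩ else 0, funext fun i => by simp [latticeVec]⟩
  · rintro ⟨x, rfl⟩
    exact ⟨fun i => x (i + 1), rfl⟩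

theorem latticeVec_mem_intLattice (x : ℕ → ℤ) : latticeVec n x ∈ intLattice n :=
  mem_intLattice_iff.2 ⟨x, rfl⟩

theorem lhForm_eq_of_latticeVec_eq {x y : ℕ → ℤ} (h : latticeVec n x = latticeVec n y) {i : ℕ}
    (hi : i < n) : lhForm s i x = lhForm s i y := by
  have hxy (j : ℕ) (hj : j < n) : x (j + 1) = y (j + 1) := by
    simpa [latticeVec] using congrFun h ⟨j, hj⟩
  rw [lhForm_apply, lhForm_apply, hxy i hi]
  split_ifs with h0
  · subst h0
    exact hxy 0 hi
  · obtain ⟨j, rfl⟩ := Nat.exists_eq_succ_of_ne_zero h0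
    rw [hxy j (by omega)]

theorem isGorensteinPoint_of_lhForm_eq_one (hs : ∀ i, 1 ≤ i → i ≤ n → 0 < s i) {c : ℕ → ℤ}
    (hc : ∀ i < n, lhForm s i c = 1) : IsGorensteinPoint (lhCone n s) (latticeVec n c) := by
  have mem_interior_iff (x : ℕ → ℤ) :
      latticeVec n x ∈ interior (lhCone n s) ↔ latticeVec n (x - c) ∈ lhCone n s := by
    rw [latticeVec_mem_interior_lhCone_iff hs, latticeVec_mem_lhCone_iff hs]
    refine forall₂_congr fun i hi => ?_
    rw [map_sub, hc i hi]
    omega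
  refine ⟨(latticeVec_mem_interior_lhCone_iff hs c).2 fun i hi => by rw [hc i hi]; exact one_pos,
    latticeVec_mem_intLattice c, Set.ext fun v => ⟨?_, ?_⟩⟩
  · rintro ⟨hv, hvl⟩
    obtain ⟨x, rfl⟩ := mem_intLattice_iff.1 hvl
    refine ⟨latticeVec n (x - c), ⟨(mem_interior_iff x).1 hv, latticeVec_mem_intLattice _⟩, ?_⟩
    dsimp only
    rw [← latticeVec_add, add_sub_cancel]
  · rintro ⟨_, ⟨hw, hwl⟩, rfl⟩
    obtain ⟨w, rfl⟩ := mem_intLattice_iff.1 hwl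
    dsimp only
    rw [← latticeVec_add]
    refine ⟨(mem_interior_iff _).2 ?_, latticeVec_mem_intLattice _⟩
    rwa [add_sub_cancel_left]

theorem lhForm_le_of_isGorensteinPoint (hs : ∀ i, 1 ≤ i → i ≤ n → 0 < s i) {c y : ℕ → ℤ}
    (hc : IsGorensteinPoint (lhCone n s) (latticeVec n c)) (hy : ∀ i < n, 0 < lhForm s i y)
    {i : ℕ} (hi : i < n) : lhForm s i c ≤ lhForm s i y := by
  have hy' : latticeVec n y ∈ interior (lhCone n s) ∩ intLattice n :=
    ⟨(latticeVec_mem_interior_lhCone_iff hs y).2 hy, latticeVec_mem_intLattice y⟩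
  rw [hc.2.2] at hy'
  obtain ⟨_, ⟨hw, hwl⟩, hyw⟩ := hy'
  obtain ⟨w, rfl⟩ := mem_intLattice_iff.1 hwl
  dsimp only at hyw
  rw [← latticeVec_add] at hyw
  rw [← lhForm_eq_of_latticeVec_eq hyw hi, map_add]
  linarith [(latticeVec_mem_lhCone_iff hs w).1 hw i hi]

theorem exists_lhForm_eq_one {k : ℕ} (hk : k ≠ 0 → IsCoprime (s k) (s (k + 1))) :
    ∃ e : ℕ → ℤ, lhForm s k e = 1 := by
  rcases eq_or_ne k 0 with rfl | hk0
  · exact ⟨fun _ => 1, by simp [lhForm_apply]⟩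
  · obtain ⟨a, b, hab⟩ := hk hk0
    refine ⟨fun j => if j = k + 1 then a else if j = k then -b else 0, ?_⟩
    simp only [lhForm_apply, hk0, ↓reduceIte, Nat.left_eq_add, one_ne_zero]
    linear_combination hab

theorem exists_lhForm_eq_zero_and_pos (hs : ∀ i, 1 ≤ i → i ≤ n → 0 < s i) (k : ℕ) :
    ∃ z : ℕ → ℤ, lhForm s k z = 0 ∧ ∀ i < n, i ≠ k → 0 < lhForm s i z := by
  -- `z j / s j = j - [k < j]` increases by `1` at every step except from `k` to `k + 1`
  refine ⟨fun j => s j * ((j : ℤ) - if k < j then 1 else 0), ?_, fun i hi hik => ?_⟩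
  · simp only [lhForm_apply]
    split_ifs <;> push_cast <;> first | omega | ring
  · have hsi := hs (i + 1) (by omega) hi
    rcases Nat.eq_zero_or_pos i with rfl | hi0
    · simpa [lhForm_apply, Ne.symm hik] using hsi
    · have hsisi := mul_pos (hs i hi0 hi.le) hsi
      simp only [lhForm_apply, if_neg hi0.ne']
      split_ifs <;> push_cast <;> first | omega | linarith

theorem exists_lhForm_pos_and_eq_one (hs : ∀ i, 1 ≤ i → i ≤ n → 0 < s i) {k : ℕ} (hk : k < n)
    (hcop : k ≠ 0 → IsCoprime (s k) (s (k + 1))) :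
    ∃ y : ℕ → ℤ, (∀ i < n, 0 < lhForm s i y) ∧ lhForm s k y = 1 := by
  obtain ⟨e, he⟩ := exists_lhForm_eq_one hcop
  obtain ⟨z, hzk, hz⟩ := exists_lhForm_eq_zero_and_pos hs k
  set N : ℤ := 1 + ∑ i ∈ Finset.range n, |lhForm s i e|
  have hy (i : ℕ) : lhForm s i (N • z + e) = N * lhForm s i z + lhForm s i e := by
    rw [map_add, map_smul, smul_eq_mul]
  refine ⟨N • z + e, fun i hi => ?_, by rw [hy, hzk, he, mul_zero, zero_add]⟩
  rcases eq_or_ne i k with rfl | hik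
  · rw [hy, hzk, he, mul_zero, zero_add]
    exact one_pos
  · have hN : |lhForm s i e| + 1 ≤ N := by
      have := Finset.single_le_sum (fun j _ => abs_nonneg (lhForm s j e)) (Finset.mem_range.2 hi)
      linarith
    have hNz : N ≤ N * lhForm s i z :=
      le_mul_of_one_le_right (by linarith [abs_nonneg (lhForm s i e)]) (hz i hi hik)
    rw [hy]
    linarith [neg_abs_le (lhForm s i e)]

theorem IsGorensteinPoint.lhForm_eq_one (hs : ∀ i, 1 ≤ i → i ≤ n → 0 < s i)
    (hgcd : ∀ i, 1 ≤ i → i < n → Int.gcd (s i) (s (i + 1)) = 1) {c : ℕ → ℤ}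
    (hc : IsGorensteinPoint (lhCone n s) (latticeVec n c)) : ∀ i < n, lhForm s i c = 1 := by
  intro k hk
  obtain ⟨y, hy, hyk⟩ := exists_lhForm_pos_and_eq_one hs hk fun hk0 =>
    Int.isCoprime_iff_gcd_eq_one.2 (hgcd k (Nat.one_le_iff_ne_zero.2 hk0) hk)
  have hck := (latticeVec_mem_interior_lhCone_iff hs c).1 hc.1 k hk
  have := lhForm_le_of_isGorensteinPoint hs hc hy hk
  omega

theorem lhForm_eq_one_of_uGenerated {u c : ℕ → ℤ} (hu : UGenerated n s u) (hc1 : c 1 = 1)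
    (hc2 : 2 ≤ n → c 2 = u 1) (hcr : ∀ i, 2 ≤ i → i < n → c (i + 1) = u i * c i - c (i - 1)) :
    ∀ i < n, lhForm s i c = 1 := by
  intro i hi
  induction i with
  | zero => simp [lhForm_apply, hc1]
  | succ i ih =>
    rcases Nat.eq_zero_or_pos i with rfl | hi0
    · simp only [lhForm_apply, zero_add, one_ne_zero, if_false, hc1, hc2 hi, hu.1 hi]
      ring
    · have hs' := hu.2 (i + 1) (by omega) hi
      have hc' := hcr (i + 1) (by omega) hi
      rw [Nat.add_sub_cancel] at hs' hc'
      rw [← ih (by omega)]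
      simp only [lhForm_apply, if_neg hi0.ne', Nat.succ_ne_zero, if_false, hs', hc']
      ring

theorem exists_uGenerated_of_lhForm_eq_one (hs : ∀ i, 1 ≤ i → i ≤ n → 0 < s i) {c : ℕ → ℤ}
    (hc : ∀ i < n, lhForm s i c = 1) :
    ∃ u : ℕ → ℤ, (∀ i, 1 ≤ i → i < n → 0 < u i) ∧ UGenerated n s u := by
  have hdet (i : ℕ) (hi0 : 1 ≤ i) (hi : i < n) : s i * c (i + 1) - s (i + 1) * c i = 1 := by
    simpa [lhForm_apply, Nat.one_le_iff_ne_zero.1 hi0] using hc i hi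
  have hdvd (i : ℕ) (hi2 : 2 ≤ i) (hi : i < n) : s i ∣ s (i - 1) + s (i + 1) := by
    have h₁ := hdet (i - 1) (by omega) (by omega)
    rw [Nat.sub_add_cancel (by omega)] at h₁
    exact dvd_add_of_mul_sub_eq_one h₁ (hdet i (by omega) hi)
  have hs2 (h2 : 2 ≤ n) : s 2 = c 2 * s 1 - 1 := by
    have h1 := hdet 1 le_rfl h2
    have h0 : c 1 = 1 := by simpa [lhForm_apply] using hc 0 (by omega)
    rw [h0] at h1
    linear_combination -h1
  refine ⟨fun i => if i = 1 then c 2 else (s (i - 1) + s (i + 1)) / s i, fun i hi1 hi => ?_,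
    fun h2 => by simp [hs2 h2], fun i hi1 hi => ?_⟩
  · dsimp only
    split_ifs with h
    · subst h
      nlinarith [hs2 hi, hs 1 le_rfl hi.le, hs 2 one_le_two hi]
    · have hsum : 0 < s (i - 1) + s (i + 1) :=
        add_pos (hs (i - 1) (by omega) (by omega)) (hs (i + 1) (by omega) hi)
      exact Int.ediv_pos_of_pos_of_dvd hsum (hs i hi1 hi.le).le (hdvd i (by omega) hi)
  · dsimp only
    rw [if_neg (by omega), Int.ediv_mul_cancel (hdvd i hi1 (by omega))]
    ring

end

def continuant (u : ℕ → ℤ) : ℕ → ℤ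
  | 0 => 0
  | 1 => 1
  | i + 2 => u (i + 1) * continuant u (i + 1) - continuant u i

theorem continuant_succ (u : ℕ → ℤ) {i : ℕ} (hi : 1 ≤ i) :
    continuant u (i + 1) = u i * continuant u i - continuant u (i - 1) := by
  obtain ⟨j, rfl⟩ := Nat.exists_eq_add_of_le' hi
  rfl

/-- If `gcd(sᵢ, s_{i+1}) = 1` for `1 ≤ i < n`, then `C_n^{(s)}` is
Gorenstein iff `s` is `u`-generated by some sequence of positive integers; in that
case the Gorenstein point `c` satisfies `c₁ = 1`, `c₂ = u₁`, and
`c_{i+1} = uᵢcᵢ - c_{i-1}` for `2 ≤ i < n`. -/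
theorem stmt7 (n : ℕ) (s : ℕ → ℤ) (hs : ∀ i, 1 ≤ i → i ≤ n → 0 < s i)
    (hgcd : ∀ i, 1 ≤ i → i < n → Int.gcd (s i) (s (i + 1)) = 1) :
    (IsGorensteinCone (lhCone n s) ↔
      ∃ u : ℕ → ℤ, (∀ i, 1 ≤ i → i < n → 0 < u i) ∧ UGenerated n s u) ∧
    (∀ u : ℕ → ℤ, (∀ i, 1 ≤ i → i < n → 0 < u i) → UGenerated n s u →
      ∀ c : ℕ → ℤ, c 1 = 1 → (2 ≤ n → c 2 = u 1) →
        (∀ i, 2 ≤ i → i < n → c (i + 1) = u i * c i - c (i - 1)) →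
        IsGorensteinPoint (lhCone n s) (fun i : Fin n => (c ((i : ℕ) + 1) : ℝ))) := by
  refine ⟨⟨fun ⟨v, hv⟩ => ?_, fun ⟨u, _, hu⟩ => ?_⟩, fun u _ hu c hc1 hc2 hcr => ?_⟩
  · obtain ⟨c, rfl⟩ := mem_intLattice_iff.1 hv.2.1
    exact exists_uGenerated_of_lhForm_eq_one hs (hv.lhForm_eq_one hs hgcd)
  · have hc := lhForm_eq_one_of_uGenerated hu (c := continuant u) rfl
      (fun _ => by simp [continuant]) fun i hi _ => continuant_succ u (by omega)
    exact ⟨_, isGorensteinPoint_of_lhForm_eq_one hs hc⟩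
  · exact isGorensteinPoint_of_lhForm_eq_one hs (lhForm_eq_one_of_uGenerated hu hc1 hc2 hcr)
end
end

section
/- Let \ell > 0 and b \ne 0 be integers satisfying \ell^2 + 4b \ge 0, and define the sequence s by s_0 = 0, s_1 = 1, s_j = \ell s_{j-1} + b s_{j-2} for j \ge 2. Set r = \gcd(\ell, b), t = \gcd(\ell^2/r, b/r), and \sigma = r/t. Then for every n \ge 1, \gcd(s_{n+1}, s_n) divides t^n \sigma^{\lfloor n/2 \rfloor}. -/
/-!
Write `ℓ = r ℓ₁`, `b = r b₁` with `ℓ₁, b₁` coprime; then `t = gcd(r, b₁)`, so that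
`ℓ = t σ ℓ₀` and `b = t² σ b₀` with `σ ℓ₀` coprime to `b₀`. Pulling out the powers of `t` and
the factors `σ` that accumulate in every second step gives `s_n = t^(n-1) σ^⌊n/2⌋ v_n`, where
`v_(n+2) = σ^(n mod 2) ℓ₀ v_(n+1) + b₀ v_n`. A Euclid-type induction shows that `v_(n+1)` is
coprime to `b₀`, odd-indexed terms of `v` are coprime to `σ`, and consecutive terms are coprime.
So `σ^(n mod 2) v_(n+1)` and `v_n` are coprime, and a Bézout relation between them writes
`t^n σ^⌊n/2⌋` as a combination of `s_(n+1)` and `s_n`.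
-/

theorem exists_eq_mul_isCoprime {ℓ b r t σ : ℤ} (hb : b ≠ 0) (hr : r = Int.gcd ℓ b)
    (ht : t = Int.gcd (ℓ ^ 2 / r) (b / r)) (hσ : σ = r / t) :
    ∃ ℓ₀ b₀, ℓ = t * σ * ℓ₀ ∧ b = t ^ 2 * σ * b₀ ∧ IsCoprime (σ * ℓ₀) b₀ := by
  have hgcd : 0 < Int.gcd ℓ b := Int.gcd_pos_of_ne_zero_right _ hb
  have hr0 : r ≠ 0 := by rw [hr]; exact_mod_cast hgcd.ne'
  obtain ⟨ℓ₁, hℓ₁⟩ : r ∣ ℓ := hr ▸ Int.gcd_dvd_left ℓ b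
  obtain ⟨b₁, hb₁⟩ : r ∣ b := hr ▸ Int.gcd_dvd_right ℓ b
  have hcop : IsCoprime ℓ₁ b₁ := by
    have h := Int.gcd_ediv_gcd_ediv_gcd hgcd
    rwa [← hr, hℓ₁, hb₁, Int.mul_ediv_cancel_left _ hr0, Int.mul_ediv_cancel_left _ hr0,
      ← Int.isCoprime_iff_gcd_eq_one] at h
  have hℓ2 : ℓ ^ 2 / r = r * ℓ₁ ^ 2 := by
    rw [hℓ₁, show (r * ℓ₁) ^ 2 = r * (r * ℓ₁ ^ 2) by ring, Int.mul_ediv_cancel_left _ hr0]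
  rw [hℓ2, hb₁, Int.mul_ediv_cancel_left _ hr0] at ht
  have htb : t ∣ b₁ := ht ▸ Int.gcd_dvd_right _ _
  -- `t` divides `r ℓ₁²` and, as a divisor of `b₁`, is coprime to `ℓ₁²`
  have htr : t ∣ r := (hcop.symm.pow_right.of_isCoprime_of_dvd_left htb).dvd_of_dvd_mul_right
    (ht ▸ Int.gcd_dvd_left _ _)
  have ht0 : t ≠ 0 := by
    rintro rfl
    exact hb (by rw [hb₁, zero_dvd_iff.mp htb, mul_zero])
  obtain ⟨b₀, rfl⟩ := htb
  obtain ⟨σ', rfl⟩ := htr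
  obtain rfl : σ = σ' := by rw [hσ, Int.mul_ediv_cancel_left _ ht0]
  refine ⟨ℓ₁, b₀, hℓ₁, by rw [hb₁]; ring, ?_⟩
  have hgcd' : Int.gcd (σ * ℓ₁ ^ 2) b₀ = 1 := by
    rw [show t * σ * ℓ₁ ^ 2 = t * (σ * ℓ₁ ^ 2) by ring, Int.gcd_mul_left] at ht
    have htabs : (t.natAbs : ℤ) = t := Int.natAbs_of_nonneg (ht ▸ Int.natCast_nonneg _)
    rw [Nat.cast_mul, htabs] at ht
    exact_mod_cast (mul_eq_left₀ ht0).mp ht.symm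
  have hcop' := Int.isCoprime_iff_gcd_eq_one.mpr hgcd'
  rw [sq, ← mul_assoc] at hcop'
  exact hcop'.of_mul_left_left

def reducedSeq (σ ℓ₀ b₀ : ℤ) : ℕ → ℤ
  | 0 => 0
  | 1 => 1
  | n + 2 => σ ^ (n % 2) * ℓ₀ * reducedSeq σ ℓ₀ b₀ (n + 1) + b₀ * reducedSeq σ ℓ₀ b₀ n

section reducedSeq

variable {σ ℓ₀ b₀ : ℤ}

@[simp] theorem reducedSeq_zero : reducedSeq σ ℓ₀ b₀ 0 = 0 := rfl

@[simp] theorem reducedSeq_one : reducedSeq σ ℓ₀ b₀ 1 = 1 := rfl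

theorem reducedSeq_add_two (n : ℕ) : reducedSeq σ ℓ₀ b₀ (n + 2) =
    σ ^ (n % 2) * ℓ₀ * reducedSeq σ ℓ₀ b₀ (n + 1) + b₀ * reducedSeq σ ℓ₀ b₀ n := rfl

theorem isCoprime_reducedSeq_succ (h : IsCoprime (σ * ℓ₀) b₀) (n : ℕ) :
    IsCoprime b₀ (reducedSeq σ ℓ₀ b₀ (n + 1)) := by
  induction n with
  | zero => exact isCoprime_one_right
  | succ n ih =>
    rw [reducedSeq_add_two]
    exact (((h.of_mul_left_left.symm.pow_right).mul_right h.of_mul_left_right.symm).mul_right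
      ih).add_mul_left_right _

theorem isCoprime_reducedSeq_odd (h : IsCoprime σ b₀) (k : ℕ) :
    IsCoprime σ (reducedSeq σ ℓ₀ b₀ (2 * k + 1)) := by
  induction k with
  | zero => exact isCoprime_one_right
  | succ k ih =>
    rw [show 2 * (k + 1) + 1 = 2 * k + 1 + 2 by ring, reducedSeq_add_two,
      show (2 * k + 1) % 2 = 1 by omega, pow_one, mul_assoc σ]
    exact (h.mul_right ih).mul_add_left_right _

theorem isCoprime_reducedSeq_succ_reducedSeq (h : IsCoprime (σ * ℓ₀) b₀) (n : ℕ) :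
    IsCoprime (reducedSeq σ ℓ₀ b₀ (n + 1)) (reducedSeq σ ℓ₀ b₀ n) := by
  induction n with
  | zero => exact isCoprime_one_left
  | succ n ih =>
    rw [reducedSeq_add_two]
    exact ((isCoprime_reducedSeq_succ h n).mul_left ih.symm).mul_add_right_left _

theorem isCoprime_pow_mul_reducedSeq_succ (h : IsCoprime (σ * ℓ₀) b₀) (n : ℕ) :
    IsCoprime (σ ^ (n % 2) * reducedSeq σ ℓ₀ b₀ (n + 1)) (reducedSeq σ ℓ₀ b₀ n) := by
  refine IsCoprime.mul_left ?_ (isCoprime_reducedSeq_succ_reducedSeq h n)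
  rcases Nat.even_or_odd' n with ⟨k, rfl | rfl⟩
  · simpa using isCoprime_one_left
  · simpa using isCoprime_reducedSeq_odd h.of_mul_left_left k

end reducedSeq

theorem eq_pow_mul_reducedSeq {ℓ b t σ ℓ₀ b₀ : ℤ} {s : ℕ → ℤ} (hℓ : ℓ = t * σ * ℓ₀)
    (hb : b = t ^ 2 * σ * b₀) (hs0 : s 0 = 0) (hs1 : s 1 = 1)
    (hrec : ∀ j, s (j + 2) = ℓ * s (j + 1) + b * s j) (n : ℕ) :
    s (n + 1) = t ^ n * σ ^ ((n + 1) / 2) * reducedSeq σ ℓ₀ b₀ (n + 1) := by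
  induction n using Nat.twoStepInduction with
  | zero => simp [hs1]
  | one => simp [hrec 0, hs0, hs1, hℓ, reducedSeq_add_two]
  | more n ih₀ ih₁ =>
    have hodd : σ ^ ((n + 3) / 2) = σ * σ ^ ((n + 1) / 2) := by
      rw [← pow_succ']; congr 1; omega
    have heven : σ ^ ((n + 3) / 2) * σ ^ ((n + 1) % 2) = σ * σ ^ ((n + 2) / 2) := by
      rw [← pow_succ', ← pow_add]; congr 1; omega
    rw [hrec, ih₀, ih₁, show n + 2 + 1 = n + 1 + 2 from rfl, reducedSeq_add_two (n + 1), hℓ, hb]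
    linear_combination (t ^ (n + 2) * ℓ₀ * reducedSeq σ ℓ₀ b₀ (n + 2)) * heven.symm
      + (t ^ (n + 2) * b₀ * reducedSeq σ ℓ₀ b₀ (n + 1)) * hodd.symm

theorem Int.gcd_mul_mul_dvd_of_isCoprime {d e x y : ℤ} (hxy : IsCoprime x y) (he : e ∣ d) :
    (Int.gcd (d * x) (e * y) : ℤ) ∣ d := by
  obtain ⟨u, v, huv⟩ := hxy
  obtain ⟨k, hk⟩ := he
  calc _ ∣ u * (d * x) + v * k * (e * y) :=
        dvd_add ((Int.gcd_dvd_left _ _).mul_left _) ((Int.gcd_dvd_right _ _).mul_left _)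
    _ = d := by linear_combination d * huv - v * y * hk

theorem stmt12_general (ℓ b : ℤ) (hb : b ≠ 0)
    (s : ℕ → ℤ) (hs0 : s 0 = 0) (hs1 : s 1 = 1)
    (hrec : ∀ j, 2 ≤ j → s j = ℓ * s (j - 1) + b * s (j - 2))
    (r t σ : ℤ) (hr : r = Int.gcd ℓ b) (ht : t = Int.gcd (ℓ ^ 2 / r) (b / r))
    (hσ : σ = r / t) :
    ∀ n, 1 ≤ n → (Int.gcd (s (n + 1)) (s n) : ℤ) ∣ t ^ n * σ ^ (n / 2) := by
  obtain ⟨ℓ₀, b₀, hℓ, hbeq, hcop⟩ := exists_eq_mul_isCoprime hb hr ht hσ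
  have hs := eq_pow_mul_reducedSeq hℓ hbeq hs0 hs1 fun j => hrec (j + 2) (by omega)
  rintro (_ | n) -
  · simp [hs0, hs1]
  have hsplit : σ ^ ((n + 1 + 1) / 2) = σ ^ ((n + 1) / 2) * σ ^ ((n + 1) % 2) := by
    rw [← pow_add]; congr 1; omega
  have hsucc : s (n + 2) = t ^ (n + 1) * σ ^ ((n + 1) / 2) *
      (σ ^ ((n + 1) % 2) * reducedSeq σ ℓ₀ b₀ (n + 2)) := by
    rw [hs, hsplit]; ring
  rw [hsucc, hs n]
  exact Int.gcd_mul_mul_dvd_of_isCoprime (isCoprime_pow_mul_reducedSeq_succ hcop (n + 1))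
    (mul_dvd_mul_right (pow_dvd_pow t n.le_succ) _)

/-- With `ℓ > 0`, `b ≠ 0`, `ℓ² + 4b ≥ 0`, `s` as usual,
`r = gcd(ℓ, b)`, `t = gcd(ℓ²/r, b/r)`, `σ = r/t`: for every `n ≥ 1`,
`gcd(s_{n+1}, sₙ)` divides `tⁿ σ^⌊n/2⌋`. -/
theorem stmt12 (ℓ b : ℤ) (hℓ : 0 < ℓ) (hb : b ≠ 0) (hD : 0 ≤ ℓ ^ 2 + 4 * b)
    (s : ℕ → ℤ) (hs0 : s 0 = 0) (hs1 : s 1 = 1)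
    (hrec : ∀ j, 2 ≤ j → s j = ℓ * s (j - 1) + b * s (j - 2))
    (r t σ : ℤ) (hr : r = Int.gcd ℓ b) (ht : t = Int.gcd (ℓ ^ 2 / r) (b / r))
    (hσ : σ = r / t) :
    ∀ n, 1 ≤ n → (Int.gcd (s (n + 1)) (s n) : ℤ) ∣ t ^ n * σ ^ (n / 2) :=
  stmt12_general ℓ b hb s hs0 hs1 hrec r t σ hr ht hσ
end

section
/- Let \ell > 0 and b \ne 0 be integers satisfying \ell^2 + 4b \ge 0, and define the sequence s by s_0 = 0, s_1 = 1, s_j = \ell s_{j-1} + b s_{j-2} for j \ge 2. Set r = \gcd(\ell, b), t = \gcd(\ell^2/r, b/r), and \sigma = r/t, and define h_n = s_n / (t^{n-1} \sigma^{\lfloor n/2 \rfloor}) for n \ge 1. Then h_n tends to infinity: for every B > 0 there exists a positive integer n_0 such that h_n > B for all n \ge n_0. -/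
/-! Write `ℓ = r a` with `gcd(a, b/r) = 1`. As `t` divides `b/r`, it is coprime to `a`, and it
divides `ℓ²/r = r a²`, so `t ∣ r`. Hence `c := r t = t² σ` divides `b`, and the denominator
`t^(n-1) σ^⌊n/2⌋` is at most `c^⌊n/2⌋`.
If `b < 0` then `4c ≤ -4b ≤ ℓ²`, while `s_{n+1} ≥ (n+1)(ℓ/2)^n`, so `h_n` grows at least linearly.
If `b > 0` then `s_{n+2} ≥ (ℓ² + b) s_n` with `ℓ² + b > b ≥ c`, so `h_n` grows geometrically. -/

open Filter

theorem Int.gcd_sq_div_gcd_dvd_gcd (ℓ b : ℤ) :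
    ((Int.gcd (ℓ ^ 2 / Int.gcd ℓ b) (b / Int.gcd ℓ b) : ℕ) : ℤ) ∣ Int.gcd ℓ b := by
  rcases Nat.eq_zero_or_pos (Int.gcd ℓ b) with hr | hr
  · simp [hr]
  set r : ℤ := (Int.gcd ℓ b : ℤ)
  have hr' : r ≠ 0 := by positivity
  obtain ⟨a, ha⟩ : r ∣ ℓ := Int.gcd_dvd_left ℓ b
  have hsq : ℓ ^ 2 / r = a ^ 2 * r := by
    rw [ha, show (r * a) ^ 2 = a ^ 2 * r * r by ring, Int.mul_ediv_cancel _ hr']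
  have hcop : IsCoprime a (b / r) := by
    have hdiv : ℓ / r = a := by rw [ha, Int.mul_ediv_cancel_left _ hr']
    rw [Int.isCoprime_iff_gcd_eq_one, ← hdiv]
    exact Int.gcd_div_gcd_div_gcd hr
  rw [hsq]
  refine IsCoprime.dvd_of_dvd_mul_left ?_ (Int.gcd_dvd_left _ _)
  exact (hcop.symm.of_isCoprime_of_dvd_left (Int.gcd_dvd_right _ _)).pow_right

/-- `u` is the Lucas sequence `U(ℓ, -b)`. -/
structure IsLucasSequence (ℓ b : ℝ) (u : ℕ → ℝ) : Prop where
  zero : u 0 = 0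
  one : u 1 = 1
  succ_succ : ∀ n, u (n + 2) = ℓ * u (n + 1) + b * u n

namespace IsLucasSequence

variable {ℓ b : ℝ} {u : ℕ → ℝ}

/-- The gap `u (n + 1) - (ℓ / 2) u n` is multiplied by `ℓ / 2` and then increased by
`(ℓ ^ 2 / 4 + b) u n ≥ 0` at each step. -/
theorem nonneg_and_half_pow_le_sub (hu : IsLucasSequence ℓ b u) (hℓ : 0 < ℓ)
    (hD : 0 ≤ ℓ ^ 2 + 4 * b) (n : ℕ) :
    0 ≤ u n ∧ (ℓ / 2) ^ n ≤ u (n + 1) - ℓ / 2 * u n := by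
  induction n with
  | zero => simp [hu.zero, hu.one]
  | succ n ih =>
    obtain ⟨hn, hgap⟩ := ih
    have hpow : 0 < (ℓ / 2) ^ n := by positivity
    refine ⟨by nlinarith, ?_⟩
    rw [hu.succ_succ, pow_succ]
    nlinarith [mul_nonneg hn hD]

theorem succ_mul_half_pow_le (hu : IsLucasSequence ℓ b u) (hℓ : 0 < ℓ)
    (hD : 0 ≤ ℓ ^ 2 + 4 * b) (n : ℕ) : (n + 1) * (ℓ / 2) ^ n ≤ u (n + 1) := by
  induction n with
  | zero => simp [hu.one]
  | succ n ih =>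
    have hgap := (hu.nonneg_and_half_pow_le_sub hℓ hD (n + 1)).2
    have hℓ2 : 0 ≤ ℓ / 2 := by positivity
    rw [pow_succ] at hgap ⊢
    push_cast
    linarith [mul_le_mul_of_nonneg_left ih hℓ2]

theorem nonneg (hu : IsLucasSequence ℓ b u) (hℓ : 0 < ℓ) (hD : 0 ≤ ℓ ^ 2 + 4 * b) (n : ℕ) :
    0 ≤ u n :=
  (hu.nonneg_and_half_pow_le_sub hℓ hD n).1

theorem pow_div_two_le (hu : IsLucasSequence ℓ b u) (hℓ : 1 ≤ ℓ) (hb : 0 ≤ b) (n : ℕ) :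
    (ℓ ^ 2 + b) ^ (n / 2) ≤ u (n + 1) := by
  have hD : 0 ≤ ℓ ^ 2 + 4 * b := by positivity
  have hnonneg := hu.nonneg (by linarith) hD
  induction n using Nat.twoStepInduction with
  | zero => simp [hu.one]
  | one => simpa [hu.succ_succ 0, hu.zero, hu.one] using hℓ
  | more n ih _ =>
    have hstep : (ℓ ^ 2 + b) * u (n + 1) ≤ u (n + 3) := by
      rw [hu.succ_succ (n + 1), hu.succ_succ n]
      nlinarith [mul_nonneg (mul_nonneg (by linarith : (0 : ℝ) ≤ ℓ) hb) (hnonneg n)]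
    rw [show (n + 2) / 2 = n / 2 + 1 by omega, pow_succ']
    exact (mul_le_mul_of_nonneg_left ih (by positivity)).trans hstep

theorem tendsto_div_pow_div_two_of_four_mul_le (hu : IsLucasSequence ℓ b u) (hℓ : 0 < ℓ)
    (hD : 0 ≤ ℓ ^ 2 + 4 * b) {c : ℝ} (hc : 1 ≤ c) (hcℓ : 4 * c ≤ ℓ ^ 2) :
    Tendsto (fun n => u n / c ^ (n / 2)) atTop atTop := by
  have hℓ2 : 1 ≤ ℓ / 2 := by nlinarith
  rw [← tendsto_add_atTop_iff_nat 1]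
  refine tendsto_atTop_mono (fun n => ?_)
    ((tendsto_natCast_atTop_atTop.comp (tendsto_add_atTop_nat 1)).atTop_div_const
      (by positivity : 0 < ℓ / 2))
  have hden : c ^ ((n + 1) / 2) ≤ (ℓ / 2) ^ n * (ℓ / 2) := calc
    c ^ ((n + 1) / 2) ≤ ((ℓ / 2) ^ 2) ^ ((n + 1) / 2) :=
      pow_le_pow_left₀ (by positivity) (by linarith) _
    _ = (ℓ / 2) ^ (2 * ((n + 1) / 2)) := by rw [pow_mul]
    _ ≤ (ℓ / 2) ^ (n + 1) := pow_le_pow_right₀ hℓ2 (by omega)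
    _ = (ℓ / 2) ^ n * (ℓ / 2) := pow_succ _ _
  calc ((n + 1 : ℕ) : ℝ) / (ℓ / 2) = (n + 1) * (ℓ / 2) ^ n / ((ℓ / 2) ^ n * (ℓ / 2)) := by
        push_cast; field_simp
    _ ≤ u (n + 1) / c ^ ((n + 1) / 2) :=
        div_le_div₀ (hu.nonneg hℓ hD _) (hu.succ_mul_half_pow_le hℓ hD n) (by positivity) hden

theorem tendsto_div_pow_div_two_of_lt (hu : IsLucasSequence ℓ b u) (hℓ : 1 ≤ ℓ) (hb : 0 ≤ b)
    {c : ℝ} (hc : 1 ≤ c) (hcM : c < ℓ ^ 2 + b) :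
    Tendsto (fun n => u n / c ^ (n / 2)) atTop atTop := by
  have hc0 : 0 < c := by linarith
  rw [← tendsto_add_atTop_iff_nat 1]
  refine tendsto_atTop_mono (fun n => ?_)
    (((tendsto_pow_atTop_atTop_of_one_lt ((one_lt_div hc0).2 hcM)).comp
      (Nat.tendsto_div_const_atTop two_ne_zero)).atTop_div_const hc0)
  have hden : c ^ ((n + 1) / 2) ≤ c ^ (n / 2) * c := by
    rw [← pow_succ]; exact pow_le_pow_right₀ hc (by omega)
  calc ((ℓ ^ 2 + b) / c) ^ (n / 2) / c = (ℓ ^ 2 + b) ^ (n / 2) / (c ^ (n / 2) * c) := by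
        rw [div_pow, div_div]
    _ ≤ u (n + 1) / c ^ ((n + 1) / 2) :=
        div_le_div₀ (hu.nonneg (by linarith) (by positivity) _) (hu.pow_div_two_le hℓ hb n)
          (by positivity) hden

theorem tendsto_div_pow_div_two (hu : IsLucasSequence ℓ b u) (hℓ : 1 ≤ ℓ)
    (hD : 0 ≤ ℓ ^ 2 + 4 * b) {c : ℝ} (hc : 1 ≤ c) (hcb : c ≤ |b|) :
    Tendsto (fun n => u n / c ^ (n / 2)) atTop atTop := by
  rcases le_or_gt b 0 with hb | hb
  · rw [abs_of_nonpos hb] at hcb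
    exact hu.tendsto_div_pow_div_two_of_four_mul_le (by linarith) hD hc (by linarith)
  · rw [abs_of_pos hb] at hcb
    exact hu.tendsto_div_pow_div_two_of_lt hℓ hb.le hc (by nlinarith)

end IsLucasSequence

theorem pow_pred_mul_pow_div_two_le {x y : ℝ} (hx : 1 ≤ x) (hy : 0 ≤ y) (n : ℕ) :
    x ^ (n - 1) * y ^ (n / 2) ≤ (x ^ 2 * y) ^ (n / 2) := by
  rw [mul_pow, ← pow_mul]
  gcongr
  omega

/-- With `ℓ > 0`, `b ≠ 0`, `ℓ² + 4b ≥ 0`, `s` as usual,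
`r = gcd(ℓ, b)`, `t = gcd(ℓ²/r, b/r)`, `σ = r/t`, and `hₙ = sₙ/(t^(n-1) σ^⌊n/2⌋)`:
for every `B > 0` there is a positive integer `n₀` with `hₙ > B` for all `n ≥ n₀`. -/
theorem stmt13 (ℓ b : ℤ) (hℓ : 0 < ℓ) (hb : b ≠ 0) (hD : 0 ≤ ℓ ^ 2 + 4 * b)
    (s : ℕ → ℤ) (hs0 : s 0 = 0) (hs1 : s 1 = 1)
    (hrec : ∀ j, 2 ≤ j → s j = ℓ * s (j - 1) + b * s (j - 2))
    (r t σ : ℤ) (hr : r = Int.gcd ℓ b) (ht : t = Int.gcd (ℓ ^ 2 / r) (b / r))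
    (hσ : σ = r / t) :
    ∀ B : ℝ, 0 < B → ∃ n₀ : ℕ, 1 ≤ n₀ ∧ ∀ n, n₀ ≤ n →
      B < (s n : ℝ) / ((t : ℝ) ^ (n - 1) * (σ : ℝ) ^ (n / 2)) := by
  have hr1 : 1 ≤ r := by rw [hr]; exact_mod_cast Int.gcd_pos_of_ne_zero_left b hℓ.ne'
  have htr : t ∣ r := by rw [ht, hr]; exact Int.gcd_sq_div_gcd_dvd_gcd ℓ b
  have hrtb : r * t ∣ b :=
    Int.mul_dvd_of_dvd_div (hr ▸ Int.gcd_dvd_right ℓ b) (ht ▸ Int.gcd_dvd_right _ _)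
  have ht1 : 1 ≤ t := by
    have : t ≠ 0 := ne_zero_of_dvd_ne_zero (by omega) htr
    have : 0 ≤ t := ht ▸ Int.natCast_nonneg _
    omega
  have hσt : t ^ 2 * σ = r * t := by rw [hσ, sq, mul_assoc, Int.mul_ediv_cancel' htr, mul_comm]
  have hσ0 : 0 < σ := by nlinarith
  have hu : IsLucasSequence ℓ b (fun n => s n) := by
    refine ⟨by simp [hs0], by simp [hs1], fun n => ?_⟩
    simpa using congrArg (Int.cast : ℤ → ℝ) (hrec (n + 2) (by omega))
  have hℓR : (1 : ℝ) ≤ ℓ := by exact_mod_cast hℓ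
  have hDR : (0 : ℝ) ≤ ℓ ^ 2 + 4 * b := by exact_mod_cast hD
  have hlim : Tendsto (fun n => (s n : ℝ) / ((r * t : ℤ) : ℝ) ^ (n / 2)) atTop atTop :=
    hu.tendsto_div_pow_div_two hℓR hDR (by exact_mod_cast one_le_mul_of_one_le_of_one_le hr1 ht1)
      (by exact_mod_cast Int.le_of_dvd (abs_pos.2 hb) ((dvd_abs _ _).2 hrtb))
  have hden (n : ℕ) : (t : ℝ) ^ (n - 1) * (σ : ℝ) ^ (n / 2) ≤ ((r * t : ℤ) : ℝ) ^ (n / 2) := by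
    have hc : (t : ℝ) ^ 2 * σ = ((r * t : ℤ) : ℝ) := by exact_mod_cast hσt
    exact hc ▸ pow_pred_mul_pow_div_two_le (by exact_mod_cast ht1) (by exact_mod_cast hσ0.le) n
  have hh : Tendsto (fun n => (s n : ℝ) / ((t : ℝ) ^ (n - 1) * (σ : ℝ) ^ (n / 2))) atTop atTop :=
    tendsto_atTop_mono (fun n => div_le_div_of_nonneg_left
      (hu.nonneg (by linarith) hDR n) (by positivity) (hden n)) hlim
  intro B _
  obtain ⟨N, hN⟩ := eventually_atTop.1 (hh.eventually_gt_atTop B)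
  exact ⟨N + 1, by omega, fun n hn => hN n (by omega)⟩
end

section
/- Let \ell > 0 and b \ne 0 be integers satisfying \ell^2 + 4b \ge 0, and define the sequence s by s_0 = 0, s_1 = 1, s_n = \ell s_{n-1} + b s_{n-2} for n \ge 2. Then the s-lecture hall cone C_n^{(s)} is Gorenstein for all n \ge 0 if and only if b = -1. Moreover, if b \ne -1, there exists n_0 = n_0(b, \ell) such that C_n^{(s)} fails to be Gorenstein for all n \ge n_0. -/
noncomputable section

open scoped Classical

/-!
For positive `s`, an integer point `m` is a Gorenstein point of `C_n^{(s)}` exactly when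
`z ↦ z - m` maps the interior lattice points onto the lattice points of the cone. The facet form
`s_{k+1} z_{k+1} - s_{k+2} z_k` is a positive multiple of `g_k = gcd(s_{k+1}, s_{k+2})` on
interior lattice points and attains `g_k` there, so a Gorenstein point has every facet value
equal to `g_k`. Two consecutive facet equations and the recurrence then give
`s_{k+2} ∣ g_{k+1} + b g_k` as soon as `n ≥ k + 3`.

If `b = -1`, Cassini's identity makes every `g_k = 1`, and `m_k = s_k + s_{k+1}` is a
Gorenstein point for every `n`. If `b ≠ -1`, the divisibility fails for some `k`: when
`g_{k+1} + b g_k ≠ 0` for infinitely many `k`, then `s_{k+2} ≤ 2|b| g_k` for those `k`, so two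
of the ratios `s_{k+2} / s_{k+1}` coincide, which d'Ocagne's identity forbids; otherwise
`g_{k+1} = -b g_k` eventually, so `g_k` grows like `|b|^k`, against `g_k² ∣ b^{k+1}`
(Cassini).
-/

section Recurrence

variable {ℓ b : ℤ} {s : ℕ → ℤ}

theorem dOcagne_identity (hs0 : s 0 = 0) (hs1 : s 1 = 1)
    (hrec : ∀ k, s (k + 2) = ℓ * s (k + 1) + b * s k) (m k : ℕ) :
    s (m + k) * s (k + 1) - s (m + k + 1) * s k = (-b) ^ k * s m := by
  induction k with
  | zero => simp [hs0, hs1]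
  | succ k ih =>
    show s (m + k + 1) * s (k + 2) - s (m + k + 2) * s (k + 1) = _
    rw [hrec (m + k), hrec k, pow_succ]
    linear_combination (-b) * ih

theorem cassini_identity (hs0 : s 0 = 0) (hs1 : s 1 = 1)
    (hrec : ∀ k, s (k + 2) = ℓ * s (k + 1) + b * s k) (k : ℕ) :
    s (k + 1) * s (k + 1) - s (k + 2) * s k = (-b) ^ k := by
  have := dOcagne_identity hs0 hs1 hrec 1 k
  rw [hs1, add_comm 1 k] at this
  simpa using this

theorem pos_and_le_two_mul (hℓ : 0 < ℓ) (hD : 0 ≤ ℓ ^ 2 + 4 * b) (hs0 : s 0 = 0)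
    (hs1 : s 1 = 1) (hrec : ∀ k, s (k + 2) = ℓ * s (k + 1) + b * s k) (j : ℕ) :
    0 < s (j + 1) ∧ ℓ * s (j + 1) ≤ 2 * s (j + 2) := by
  induction j with
  | zero =>
    have h2 : s 2 = ℓ := by simpa [hs0, hs1] using hrec 0
    simp only [hs1, h2]
    constructor <;> linarith
  | succ j ih =>
    obtain ⟨h1, h2⟩ := ih
    have hs2 : 0 < s (j + 2) := by nlinarith
    refine ⟨hs2, ?_⟩
    -- multiplied by `ℓ`, the step is `ℓ² s_{j+2} ≥ -4b s_{j+1}`, i.e. the invariant and `hD`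
    have hr : s (j + 3) = ℓ * s (j + 2) + b * s (j + 1) := hrec (j + 1)
    have : ℓ * (ℓ * s (j + 2)) ≤ ℓ * (2 * s (j + 3)) := by
      rw [hr]
      rcases le_or_gt 0 b with hb | hb
      · nlinarith [mul_nonneg (mul_nonneg hℓ.le hb) h1.le, mul_pos (mul_pos hℓ hℓ) hs2]
      · nlinarith
    exact le_of_mul_le_mul_left this hℓ

theorem le_succ_of_disc_nonneg (hℓ : 0 < ℓ) (hD : 0 ≤ ℓ ^ 2 + 4 * b) (hs0 : s 0 = 0)
    (hs1 : s 1 = 1) (hrec : ∀ k, s (k + 2) = ℓ * s (k + 1) + b * s k) (j : ℕ) :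
    s (j + 1) ≤ s (j + 2) := by
  obtain ⟨hpos, hle⟩ := pos_and_le_two_mul hℓ hD hs0 hs1 hrec j
  rcases le_or_gt 2 ℓ with hℓ2 | hℓ2
  · nlinarith
  · have hsj : 0 ≤ s j := by
      rcases j with _ | j
      · exact hs0.ge
      · exact (pos_and_le_two_mul hℓ hD hs0 hs1 hrec j).1.le
    obtain rfl : ℓ = 1 := by omega
    have hb : 0 ≤ b := by omega
    nlinarith [hrec j]

theorem mul_ne_mul_of_lt (hb : b ≠ 0) (hs0 : s 0 = 0) (hs1 : s 1 = 1)
    (hrec : ∀ k, s (k + 2) = ℓ * s (k + 1) + b * s k) (hpos : ∀ j, 0 < s (j + 1)) {i j : ℕ}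
    (hij : i < j) : s (i + 2) * s (j + 1) ≠ s (j + 2) * s (i + 1) := by
  obtain ⟨d, rfl⟩ := Nat.exists_eq_add_of_lt hij
  show s (i + 2) * s (i + d + 2) ≠ s (i + d + 3) * s (i + 1)
  have h := dOcagne_identity hs0 hs1 hrec (d + 1) (i + 1)
  rw [show d + 1 + (i + 1) = i + d + 2 by ring] at h
  change s (i + d + 2) * s (i + 2) - s (i + d + 3) * s (i + 1) = _ at h
  have hne : (-b) ^ (i + 1) * s (d + 1) ≠ 0 :=
    mul_ne_zero (pow_ne_zero _ (neg_ne_zero.2 hb)) (hpos d).ne'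
  intro heq
  exact hne (by rw [← h]; linear_combination heq)

end Recurrence

theorem exists_le_mul_sub_mul_eq_gcd {a b : ℤ} (ha : 0 < a) (L : ℤ) :
    ∃ x y, L ≤ x ∧ a * y - b * x = Int.gcd a b := by
  obtain ⟨a', ha'⟩ := Int.gcd_dvd_left a b
  obtain ⟨b', hb'⟩ := Int.gcd_dvd_right a b
  have hg : (0 : ℤ) < Int.gcd a b := by exact_mod_cast Int.gcd_pos_of_ne_zero_left b ha.ne'
  have ha'1 : 1 ≤ a' := by nlinarith
  set t := |Int.gcdB a b| + |L|
  -- shifting a Bézout pair along `(a, b) / gcd a b` keeps `a * y - b * x` fixed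
  refine ⟨-Int.gcdB a b + t * a', Int.gcdA a b + t * b', ?_, ?_⟩
  · have ht : 0 ≤ t := by positivity
    nlinarith [le_abs_self (Int.gcdB a b), le_abs_self L, mul_nonneg ht (sub_nonneg.2 ha'1)]
  · linear_combination -Int.gcd_eq_gcd_ab a b + t * b' * ha' - t * a' * hb'

section Gcd

variable {ℓ b : ℤ} {s : ℕ → ℤ}

def consecGcd (s : ℕ → ℤ) (i : ℕ) : ℤ := Int.gcd (s (i + 1)) (s (i + 2))

theorem consecGcd_dvd_left (i : ℕ) : consecGcd s i ∣ s (i + 1) := Int.gcd_dvd_left _ _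

theorem consecGcd_dvd_right (i : ℕ) : consecGcd s i ∣ s (i + 2) := Int.gcd_dvd_right _ _

theorem consecGcd_pos (hpos : ∀ j, 0 < s (j + 1)) (i : ℕ) : 0 < consecGcd s i := by
  unfold consecGcd
  exact_mod_cast Int.gcd_pos_of_ne_zero_left _ (hpos i).ne'

theorem sq_consecGcd_dvd (hs0 : s 0 = 0) (hs1 : s 1 = 1)
    (hrec : ∀ k, s (k + 2) = ℓ * s (k + 1) + b * s k) (i : ℕ) :
    consecGcd s i ^ 2 ∣ (-b) ^ (i + 1) := by
  have h3 : consecGcd s i ∣ s (i + 3) := by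
    rw [show s (i + 3) = ℓ * s (i + 2) + b * s (i + 1) from hrec (i + 1)]
    exact dvd_add (dvd_mul_of_dvd_right (consecGcd_dvd_right i) _)
      (dvd_mul_of_dvd_right (consecGcd_dvd_left i) _)
  rw [← cassini_identity hs0 hs1 hrec (i + 1), sq]
  exact dvd_sub (mul_dvd_mul (consecGcd_dvd_right i) (consecGcd_dvd_right i))
    (mul_dvd_mul h3 (consecGcd_dvd_left i))

theorem le_two_mul_abs_mul_consecGcd (hb : b ≠ 0) (hpos : ∀ j, 0 < s (j + 1)) {i : ℕ}
    (hdvd : s (i + 2) ∣ consecGcd s (i + 1) + b * consecGcd s i)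
    (hne : consecGcd s (i + 1) + b * consecGcd s i ≠ 0) :
    s (i + 2) ≤ 2 * |b| * consecGcd s i := by
  have hg := consecGcd_pos hpos i
  have hdvd' : consecGcd s (i + 1) ∣ b * consecGcd s i :=
    (dvd_add_right (dvd_refl _)).1 ((consecGcd_dvd_left (i + 1)).trans hdvd)
  have h1 : consecGcd s (i + 1) ≤ |b| * consecGcd s i := by
    rw [← abs_of_pos hg, ← abs_mul]
    exact Int.le_of_dvd (abs_pos.2 (mul_ne_zero hb hg.ne')) ((dvd_abs _ _).2 hdvd')
  calc s (i + 2) ≤ |consecGcd s (i + 1) + b * consecGcd s i| :=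
        Int.le_of_dvd (abs_pos.2 hne) ((dvd_abs _ _).2 hdvd)
    _ ≤ |consecGcd s (i + 1)| + |b| * |consecGcd s i| := by rw [← abs_mul]; exact abs_add_le _ _
    _ ≤ 2 * |b| * consecGcd s i := by
      rw [abs_of_pos (consecGcd_pos hpos _), abs_of_pos hg]; linarith

end Gcd

section Cone

variable {s : ℕ → ℤ} {n : ℕ}

theorem exists_pos_add_smul_mem_of_mem_interior {E : Type*} [AddCommGroup E] [Module ℝ E]
    [TopologicalSpace E] [ContinuousAdd E] [ContinuousSMul ℝ E] {C : Set E} {x : E}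
    (hx : x ∈ interior C) (v : E) : ∃ t : ℝ, 0 < t ∧ x + t • v ∈ C := by
  have hline : Filter.Tendsto (fun t : ℝ => x + t • v) (nhdsWithin 0 (Set.Ioi 0)) (nhds x) := by
    have : Continuous (fun t : ℝ => x + t • v) := by fun_prop
    simpa using (this.tendsto 0).mono_left nhdsWithin_le_nhds
  obtain ⟨t, htC, ht⟩ :=
    ((hline.eventually (mem_interior_iff_mem_nhds.1 hx)).and self_mem_nhdsWithin).exists
  exact ⟨t, ht, htC⟩

theorem mem_lhCone_iff (hpos : ∀ j, 0 < s (j + 1)) (x : Fin n → ℝ) :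
    x ∈ lhCone n s ↔ (∀ i : Fin n, (i : ℕ) = 0 → 0 ≤ x i) ∧
      ∀ i j : Fin n, (j : ℕ) = i + 1 → (s (i + 2) : ℝ) * x i ≤ s (i + 1) * x j := by
  have hposR : ∀ j, (0 : ℝ) < s (j + 1) := fun j => by exact_mod_cast hpos j
  refine and_congr (forall₂_congr fun i _ => ?_) (forall₃_congr fun i j hij => ?_)
  · rw [le_div_iff₀ (hposR 0), zero_mul]
  · rw [hij, div_le_div_iff₀ (hposR _) (hposR _), mul_comm (x i), mul_comm (x j)]

theorem mem_interior_lhCone_iff (hpos : ∀ j, 0 < s (j + 1)) (x : Fin n → ℝ) :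
    x ∈ interior (lhCone n s) ↔ (∀ i : Fin n, (i : ℕ) = 0 → 0 < x i) ∧
      ∀ i j : Fin n, (j : ℕ) = i + 1 → (s (i + 2) : ℝ) * x i < s (i + 1) * x j := by
  constructor
  · intro hx
    refine ⟨fun i hi => ?_, fun i j hij => ?_⟩
    · obtain ⟨t, ht, hmem⟩ := exists_pos_add_smul_mem_of_mem_interior hx (-Pi.single i 1)
      have := ((mem_lhCone_iff hpos _).1 hmem).1 i hi
      simp at this
      linarith
    · obtain ⟨t, ht, hmem⟩ := exists_pos_add_smul_mem_of_mem_interior hx (Pi.single i 1)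
      have := ((mem_lhCone_iff hpos _).1 hmem).2 i j hij
      have hji : j ≠ i := fun h => by simp [h] at hij
      have hs : (0 : ℝ) < s (i + 2) := by exact_mod_cast hpos (i + 1)
      simp [hji] at this
      nlinarith
  · intro hx
    have hopen : IsOpen {y : Fin n → ℝ | (∀ i : Fin n, (i : ℕ) = 0 → 0 < y i) ∧
        ∀ i j : Fin n, (j : ℕ) = i + 1 → (s (i + 2) : ℝ) * y i < s (i + 1) * y j} := by
      simp only [Set.ofPred_and, Set.ofPred_forall]
      exact (isOpen_iInter_of_finite fun i => isOpen_iInter_of_finite fun _ =>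
        isOpen_lt continuous_const (continuous_apply i)).inter
        (isOpen_iInter_of_finite fun i => isOpen_iInter_of_finite fun j =>
          isOpen_iInter_of_finite fun _ => isOpen_lt (by fun_prop) (by fun_prop))
    exact interior_maximal (fun y hy => (mem_lhCone_iff hpos y).2
      ⟨fun i hi => (hy.1 i hi).le, fun i j hij => (hy.2 i j hij).le⟩) hopen hx

def pointOfSeq (n : ℕ) (z : ℕ → ℤ) : Fin n → ℝ := fun i => (z i : ℝ)

def IsLectureHall (s : ℕ → ℤ) (n : ℕ) (z : ℕ → ℤ) : Prop :=
  (0 < n → 0 ≤ z 0) ∧ ∀ j, j + 1 < n → s (j + 2) * z j ≤ s (j + 1) * z (j + 1)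

def IsStrictLectureHall (s : ℕ → ℤ) (n : ℕ) (z : ℕ → ℤ) : Prop :=
  (0 < n → 0 < z 0) ∧ ∀ j, j + 1 < n → s (j + 2) * z j < s (j + 1) * z (j + 1)

theorem forall_fin_zero_and_succ_iff (P : ℕ → Prop) (Q : ℕ → ℕ → Prop) :
    ((∀ i : Fin n, (i : ℕ) = 0 → P i) ∧ ∀ i j : Fin n, (j : ℕ) = i + 1 → Q i j) ↔
      ((0 < n → P 0) ∧ ∀ j, j + 1 < n → Q j (j + 1)) :=
  and_congr ⟨fun h hn => h ⟨0, hn⟩ rfl, fun h i hi => hi ▸ h (hi ▸ i.isLt)⟩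
    ⟨fun h j hj => h ⟨j, by omega⟩ ⟨j + 1, hj⟩ rfl,
      fun h i j hij => hij ▸ h i (hij ▸ j.isLt)⟩

theorem pointOfSeq_mem_lhCone_iff (hpos : ∀ j, 0 < s (j + 1)) (z : ℕ → ℤ) :
    pointOfSeq n z ∈ lhCone n s ↔ IsLectureHall s n z := by
  rw [mem_lhCone_iff hpos]
  refine (forall_fin_zero_and_succ_iff (fun i => 0 ≤ ((z i : ℤ) : ℝ))
    (fun i j => (s (i + 2) : ℝ) * z i ≤ s (i + 1) * z j)).trans ?_
  simp only [IsLectureHall]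
  norm_cast

theorem pointOfSeq_mem_interior_lhCone_iff (hpos : ∀ j, 0 < s (j + 1)) (z : ℕ → ℤ) :
    pointOfSeq n z ∈ interior (lhCone n s) ↔ IsStrictLectureHall s n z := by
  rw [mem_interior_lhCone_iff hpos]
  refine (forall_fin_zero_and_succ_iff (fun i => 0 < ((z i : ℤ) : ℝ))
    (fun i j => (s (i + 2) : ℝ) * z i < s (i + 1) * z j)).trans ?_
  simp only [IsStrictLectureHall]
  norm_cast

theorem range_pointOfSeq (n : ℕ) : Set.range (pointOfSeq n) = intLattice n := by
  ext x
  constructor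
  · rintro ⟨z, rfl⟩
    exact ⟨fun i => z i, rfl⟩
  · rintro ⟨m, rfl⟩
    exact ⟨fun j => if h : j < n then m ⟨j, h⟩ else 0, funext fun i => by simp [pointOfSeq]⟩

theorem pointOfSeq_sub (z m : ℕ → ℤ) :
    pointOfSeq n (z - m) = pointOfSeq n z - pointOfSeq n m := by
  ext i
  simp [pointOfSeq]

theorem add_mem_intLattice {x y : Fin n → ℝ} (hx : x ∈ intLattice n)
    (hy : y ∈ intLattice n) : x + y ∈ intLattice n := by
  obtain ⟨a, rfl⟩ := hx
  obtain ⟨b, rfl⟩ := hy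
  exact ⟨a + b, by ext; simp⟩

theorem sub_mem_intLattice {x y : Fin n → ℝ} (hx : x ∈ intLattice n)
    (hy : y ∈ intLattice n) : x - y ∈ intLattice n := by
  obtain ⟨a, rfl⟩ := hx
  obtain ⟨b, rfl⟩ := hy
  exact ⟨a - b, by ext; simp⟩

theorem isGorensteinPoint_iff {C : Set (Fin n → ℝ)} (hC : 0 ∈ C) (c : Fin n → ℝ) :
    IsGorensteinPoint C c ↔
      c ∈ intLattice n ∧ ∀ x ∈ intLattice n, x ∈ interior C ↔ x - c ∈ C := by
  constructor
  · rintro ⟨-, hcL, hEq⟩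
    refine ⟨hcL, fun x hxL => ⟨fun hxI => ?_, fun hxC => ?_⟩⟩
    · obtain ⟨y, ⟨hyC, -⟩, rfl⟩ : x ∈ (fun y => c + y) '' (C ∩ intLattice n) :=
        hEq ▸ ⟨hxI, hxL⟩
      simpa using hyC
    · have : x ∈ (fun y => c + y) '' (C ∩ intLattice n) :=
        ⟨x - c, ⟨hxC, sub_mem_intLattice hxL hcL⟩, add_sub_cancel c x⟩
      exact (hEq ▸ this).1
  · rintro ⟨hcL, h⟩
    refine ⟨(h c hcL).2 (by simpa using hC), hcL, Set.ext fun x => ⟨?_, ?_⟩⟩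
    · rintro ⟨hxI, hxL⟩
      exact ⟨x - c, ⟨(h x hxL).1 hxI, sub_mem_intLattice hxL hcL⟩, add_sub_cancel c x⟩
    · rintro ⟨y, ⟨hyC, hyL⟩, rfl⟩
      have hL := add_mem_intLattice hcL hyL
      exact ⟨(h _ hL).2 (by simpa using hyC), hL⟩

theorem zero_mem_lhCone : (0 : Fin n → ℝ) ∈ lhCone n s := by
  simp [lhCone]

theorem isGorensteinCone_lhCone_iff (hpos : ∀ j, 0 < s (j + 1)) :
    IsGorensteinCone (lhCone n s) ↔
      ∃ m : ℕ → ℤ, ∀ z, IsStrictLectureHall s n z ↔ IsLectureHall s n (z - m) := by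
  simp only [IsGorensteinCone, isGorensteinPoint_iff zero_mem_lhCone, ← range_pointOfSeq,
    Set.exists_range_iff, Set.forall_mem_range, ← pointOfSeq_sub, pointOfSeq_mem_lhCone_iff hpos,
    pointOfSeq_mem_interior_lhCone_iff hpos]

end Cone

section Construction

variable {s : ℕ → ℤ}

def chainSeq (s : ℕ → ℤ) (v : ℕ → ℤ) (p : ℕ) : ℕ → ℤ
  | 0 => v 0
  | j + 1 => if j + 1 ≤ p then v (j + 1) else s (j + 2) * chainSeq s v p j + 1

theorem chainSeq_of_le (v : ℕ → ℤ) {p j : ℕ} (h : j ≤ p) : chainSeq s v p j = v j := by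
  cases j with
  | zero => rfl
  | succ j => simp [chainSeq, h]

theorem chainSeq_succ (v : ℕ → ℤ) {p j : ℕ} (h : p ≤ j) :
    chainSeq s v p (j + 1) = s (j + 2) * chainSeq s v p j + 1 := by
  simp [chainSeq, show ¬ j + 1 ≤ p by omega]

theorem chainSeq_nonneg (hpos : ∀ j, 0 < s (j + 1)) {v : ℕ → ℤ} {p : ℕ} (hv : 0 ≤ v p)
    {j : ℕ} (h : p ≤ j) : 0 ≤ chainSeq s v p j := by
  induction j, h using Nat.le_induction with
  | base => rw [chainSeq_of_le v le_rfl]; exact hv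
  | succ j hj ih =>
    rw [chainSeq_succ v hj]
    nlinarith [hpos (j + 1)]

theorem chainSeq_lt (hpos : ∀ j, 0 < s (j + 1)) {v : ℕ → ℤ} {p : ℕ} (hv : 0 ≤ v p)
    {j : ℕ} (h : p ≤ j) :
    s (j + 2) * chainSeq s v p j < s (j + 1) * chainSeq s v p (j + 1) := by
  have hX : 0 ≤ s (j + 2) * chainSeq s v p j :=
    mul_nonneg (hpos (j + 1)).le (chainSeq_nonneg hpos hv h)
  have h1 : 1 ≤ s (j + 1) := hpos j
  rw [chainSeq_succ v h]
  nlinarith [mul_nonneg (sub_nonneg.2 h1) (add_nonneg hX zero_le_one)]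

theorem exists_strict_facet_eq_consecGcd (hpos : ∀ j, 0 < s (j + 1)) (k : ℕ) :
    ∃ z : ℕ → ℤ, 0 < z 0 ∧ (∀ j, s (j + 2) * z j < s (j + 1) * z (j + 1)) ∧
      s (k + 1) * z (k + 1) - s (k + 2) * z k = consecGcd s k := by
  -- `D` is strict everywhere; replace its entries at `k, k + 1` by a Bézout pair `(A, B)` with
  -- `A ≥ D k`, and continue strictly past `k + 1`
  set D := chainSeq s (fun _ => 1) 0
  have hD : ∀ j, s (j + 2) * D j < s (j + 1) * D (j + 1) := fun j =>
    chainSeq_lt hpos zero_le_one (Nat.zero_le j)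
  obtain ⟨A, B, hAD, hAB⟩ := exists_le_mul_sub_mul_eq_gcd (b := s (k + 2)) (hpos k) (D k)
  set z := chainSeq s (fun j => if j < k then D j else if j = k then A else B) (k + 1)
    with hz
  have hz_lt : ∀ j < k, z j = D j := fun j hj => by
    rw [hz, chainSeq_of_le _ (by omega), if_pos hj]
  have hz_k : z k = A := by
    rw [hz, chainSeq_of_le _ (Nat.le_succ k), if_neg (lt_irrefl k), if_pos rfl]
  have hz_k1 : z (k + 1) = B := by
    rw [hz, chainSeq_of_le _ le_rfl, if_neg (by omega), if_neg (by omega)]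
  have hfacet : s (k + 1) * z (k + 1) - s (k + 2) * z k = consecGcd s k := by
    rw [hz_k, hz_k1]; exact hAB
  have hD0 : 0 ≤ D k := chainSeq_nonneg hpos zero_le_one (Nat.zero_le k)
  have hB : 0 ≤ B := by nlinarith [hpos k, hpos (k + 1), consecGcd_pos hpos k]
  refine ⟨z, ?_, fun j => ?_, hfacet⟩
  · rcases Nat.eq_zero_or_pos k with rfl | hk
    · rw [hz_k]; exact lt_of_lt_of_le zero_lt_one hAD
    · rw [hz_lt 0 hk]; exact zero_lt_one
  · rcases lt_trichotomy j k with hj | rfl | hj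
    · have hle : D (j + 1) ≤ z (j + 1) := by
        rcases (show j + 1 ≤ k from hj).lt_or_eq with hj' | hj'
        · rw [hz_lt _ hj']
        · rw [hj', hz_k]; exact hAD
      rw [hz_lt j hj]
      nlinarith [hD j, hpos j]
    · linarith [consecGcd_pos hpos j]
    · exact chainSeq_lt hpos (by simp [hB]) (show k + 1 ≤ j by omega)

end Construction

section Gorenstein

variable {ℓ b : ℤ} {s : ℕ → ℤ} {n : ℕ}

theorem facet_eq_consecGcd (hpos : ∀ j, 0 < s (j + 1)) {m : ℕ → ℤ}
    (hm : ∀ z, IsStrictLectureHall s n z ↔ IsLectureHall s n (z - m)) {k : ℕ}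
    (hk : k + 1 < n) : s (k + 1) * m (k + 1) - s (k + 2) * m k = consecGcd s k := by
  have hm_strict : IsStrictLectureHall s n m := (hm m).2 (by simp [IsLectureHall])
  have hlower : consecGcd s k ≤ s (k + 1) * m (k + 1) - s (k + 2) * m k :=
    Int.le_of_dvd (by linarith [hm_strict.2 k hk])
      (dvd_sub (dvd_mul_of_dvd_left (consecGcd_dvd_left k) _)
        (dvd_mul_of_dvd_left (consecGcd_dvd_right k) _))
  obtain ⟨z, hz0, hz, hzk⟩ := exists_strict_facet_eq_consecGcd hpos k
  have hupper := ((hm z).1 ⟨fun _ => hz0, fun j _ => hz j⟩).2 k hk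
  simp only [Pi.sub_apply] at hupper
  linarith

theorem dvd_of_isGorensteinCone (hpos : ∀ j, 0 < s (j + 1))
    (hrec : ∀ k, s (k + 2) = ℓ * s (k + 1) + b * s k) {i : ℕ} (hn : i + 3 ≤ n)
    (h : IsGorensteinCone (lhCone n s)) :
    s (i + 2) ∣ consecGcd s (i + 1) + b * consecGcd s i := by
  obtain ⟨m, hm⟩ := (isGorensteinCone_lhCone_iff hpos).1 h
  have h0 := facet_eq_consecGcd hpos hm (k := i) (by omega)
  have h1 : s (i + 2) * m (i + 2) - s (i + 3) * m (i + 1) = consecGcd s (i + 1) :=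
    facet_eq_consecGcd hpos hm (by omega)
  have hr : s (i + 3) = ℓ * s (i + 2) + b * s (i + 1) := hrec (i + 1)
  exact ⟨m (i + 2) - ℓ * m (i + 1) - b * m i,
    by linear_combination -h1 - b * h0 - m (i + 1) * hr⟩

theorem isGorensteinCone_of_cassini (hs0 : s 0 = 0) (hs1 : s 1 = 1)
    (hpos : ∀ j, 0 < s (j + 1)) (hcas : ∀ j, s (j + 1) * s (j + 1) - s (j + 2) * s j = 1)
    (n : ℕ) : IsGorensteinCone (lhCone n s) := by
  refine (isGorensteinCone_lhCone_iff hpos).2 ⟨fun j => s j + s (j + 1), fun z => ?_⟩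
  simp only [IsStrictLectureHall, IsLectureHall, Pi.sub_apply, zero_add, hs0, hs1]
  refine and_congr (imp_congr_right fun _ => by omega) (forall₂_congr fun j _ => ?_)
  rw [← Int.add_one_le_iff]
  constructor <;> intro h <;> linarith [hcas j]

end Gorenstein

section Divisibility

variable {ℓ b : ℤ} {s : ℕ → ℤ}

theorem exists_lt_mul_eq_of_infinite (hpos : ∀ j, 0 < s (j + 1))
    (hmono : ∀ j, s (j + 1) ≤ s (j + 2)) {T : Set ℕ} (hT : T.Infinite) {K : ℤ}
    (hK : ∀ i ∈ T, s (i + 2) ≤ K * consecGcd s i) :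
    ∃ i j, i < j ∧ s (i + 2) * s (j + 1) = s (j + 2) * s (i + 1) := by
  set u := fun i => s (i + 1) / consecGcd s i
  set w := fun i => s (i + 2) / consecGcd s i
  have hu : ∀ i, u i * consecGcd s i = s (i + 1) := fun i =>
    Int.ediv_mul_cancel (consecGcd_dvd_left i)
  have hw : ∀ i, w i * consecGcd s i = s (i + 2) := fun i =>
    Int.ediv_mul_cancel (consecGcd_dvd_right i)
  have hmaps : Set.MapsTo (fun i => (u i, w i)) T (Set.Icc (1, 1) (K, K)) := by
    intro i hi
    have hg := consecGcd_pos hpos i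
    have h1 : 1 ≤ u i := by nlinarith [hu i, hpos i]
    have h2 : u i ≤ w i := le_of_mul_le_mul_right (by rw [hu, hw]; exact hmono i) hg
    have h3 : w i ≤ K := le_of_mul_le_mul_right (by rw [hw]; exact hK i hi) hg
    exact ⟨⟨h1, h1.trans h2⟩, ⟨h2.trans h3, h3⟩⟩
  obtain ⟨i, -, j, -, hij, heq⟩ := hT.exists_lt_map_eq_of_mapsTo hmaps (Set.finite_Icc _ _)
  obtain ⟨hu', hw'⟩ := Prod.mk.inj heq
  refine ⟨i, j, hij, ?_⟩
  rw [← hw i, ← hu j, ← hw j, ← hu i, hu', hw']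
  ring

theorem not_eventually_mul_eq_of_sq_dvd_pow {B : ℤ} (hB : 2 ≤ B) {G : ℕ → ℤ}
    (hG : ∀ i, 0 < G i) (hdvd : ∀ i, G i ^ 2 ∣ B ^ (i + 1)) (I : ℕ) :
    ¬ ∀ i, I ≤ i → G (i + 1) = B * G i := by
  intro h
  have hgeom : ∀ m, G (I + m) = B ^ m * G I := by
    intro m
    induction m with
    | zero => simp
    | succ m ih => rw [← add_assoc, h _ (by omega), ih, pow_succ]; ring
  -- at `i = 2I + 2` the geometric growth `B^(2(I+2))` beats the divisor bound `B^(2I+3)`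
  have hle : B ^ (2 * I + 4) ≤ B ^ (2 * I + 3) :=
    calc B ^ (2 * I + 4) ≤ B ^ (2 * I + 4) * G I ^ 2 :=
          le_mul_of_one_le_right (by positivity) (one_le_pow₀ (hG I))
      _ = G (I + (I + 2)) ^ 2 := by rw [hgeom]; ring
      _ ≤ B ^ (I + (I + 2) + 1) := Int.le_of_dvd (by positivity) (hdvd _)
      _ = B ^ (2 * I + 3) := by ring
  exact absurd hle (not_le.2 (pow_lt_pow_right₀ (by omega) (by omega)))

theorem eq_neg_one_of_forall_dvd (hb : b ≠ 0) (hs0 : s 0 = 0) (hs1 : s 1 = 1)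
    (hrec : ∀ k, s (k + 2) = ℓ * s (k + 1) + b * s k) (hpos : ∀ j, 0 < s (j + 1))
    (hmono : ∀ j, s (j + 1) ≤ s (j + 2))
    (hdvd : ∀ i, s (i + 2) ∣ consecGcd s (i + 1) + b * consecGcd s i) : b = -1 := by
  by_contra hb1
  set T := {i | consecGcd s (i + 1) + b * consecGcd s i ≠ 0}
  by_cases hT : T.Infinite
  · obtain ⟨i, j, hij, heq⟩ := exists_lt_mul_eq_of_infinite hpos hmono hT
      (fun i hi => le_two_mul_abs_mul_consecGcd hb hpos (hdvd i) hi)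
    exact mul_ne_mul_of_lt hb hs0 hs1 hrec hpos hij heq
  · obtain ⟨I, hI⟩ := (Set.not_infinite.1 hT).bddAbove
    have hgeom : ∀ i, I + 1 ≤ i → consecGcd s (i + 1) = -b * consecGcd s i := by
      intro i hi
      by_contra hne
      have : i ∈ T := fun h => hne (by linear_combination h)
      exact absurd (hI this) (by omega)
    have hB : 2 ≤ -b := by
      have : 0 < -b := pos_of_mul_pos_left (hgeom (I + 1) le_rfl ▸ consecGcd_pos hpos (I + 2))
        (consecGcd_pos hpos (I + 1)).le
      omega
    exact not_eventually_mul_eq_of_sq_dvd_pow hB (consecGcd_pos hpos)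
      (sq_consecGcd_dvd hs0 hs1 hrec) (I + 1) hgeom

end Divisibility

/-- With `ℓ > 0`, `b ≠ 0`, `ℓ² + 4b ≥ 0`, and `s` defined by
`s₀ = 0`, `s₁ = 1`, `sₙ = ℓ s_{n-1} + b s_{n-2}`: the `s`-lecture hall cone
`C_n^{(s)}` is Gorenstein for all `n ≥ 0` iff `b = -1`; and if `b ≠ -1` there is
`n₀ = n₀(b, ℓ)` such that `C_n^{(s)}` fails to be Gorenstein for all `n ≥ n₀`. -/
theorem stmt15 (ℓ b : ℤ) (hℓ : 0 < ℓ) (hb : b ≠ 0) (hD : 0 ≤ ℓ ^ 2 + 4 * b)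
    (s : ℕ → ℤ) (hs0 : s 0 = 0) (hs1 : s 1 = 1)
    (hrec : ∀ j, 2 ≤ j → s j = ℓ * s (j - 1) + b * s (j - 2)) :
    ((∀ n : ℕ, IsGorensteinCone (lhCone n s)) ↔ b = -1) ∧
    (b ≠ -1 → ∃ n₀ : ℕ, ∀ n, n₀ ≤ n → ¬ IsGorensteinCone (lhCone n s)) := by
  have hrec' : ∀ k, s (k + 2) = ℓ * s (k + 1) + b * s k := fun k => hrec (k + 2) (by omega)
  have hpos j := (pos_and_le_two_mul hℓ hD hs0 hs1 hrec' j).1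
  have hmono := le_succ_of_disc_nonneg hℓ hD hs0 hs1 hrec'
  have hneg_one := eq_neg_one_of_forall_dvd hb hs0 hs1 hrec' hpos hmono
  refine ⟨⟨fun h => hneg_one fun i => dvd_of_isGorensteinCone hpos hrec' le_rfl (h (i + 3)),
    fun hb1 => isGorensteinCone_of_cassini hs0 hs1 hpos fun j => ?_⟩, fun hb1 => ?_⟩
  · simpa [hb1] using cassini_identity hs0 hs1 hrec' j
  · obtain ⟨i, hi⟩ : ∃ i, ¬ s (i + 2) ∣ consecGcd s (i + 1) + b * consecGcd s i := by
      by_contra! h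
      exact hb1 (hneg_one h)
    exact ⟨i + 3, fun n hn h => hi (dvd_of_isGorensteinCone hpos hrec' hn h)⟩
end
end
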